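/- arXiv:0709.4118 — 10 statements merged into one kernel-verified Lean document; each statement's English description precedes it below -/
import Mathlib

section
/- Let μ be an upper closure operator on 𝒫(Σ), and define ν : Set Σ → Set Σ by ν(X) := ⋃_{x∈X} μ({x}). Then: (1) ν is an additive upper closure operator; (2) ν(X) ⊆ μ(X) for all X; (3) ν({x}) = μ({x}) for all x ∈ Σ (so ν induces the same partition as μ); and (4) ν is the most abstract such refinement: for every additive upper closure operator ρ with ρ(X) ⊆ μ(X) for all X, one has ρ(X) ⊆ ν(X) for all X. (Thus ν is the disjunctive completion of μ.) -/
/-- The map `ν X = ⋃_{x ∈ X} μ {x}` is the disjunctive completion of the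
upper closure operator `μ`: it is an additive upper closure operator, pointwise below `μ`,
agrees with `μ` on singletons, and is the greatest additive closure operator below `μ`. -/
theorem stmt_3 {α : Type*} (μ : Set α → Set α)
    (hmono : ∀ X Y : Set α, X ⊆ Y → μ X ⊆ μ Y)
    (hidem : ∀ X : Set α, μ (μ X) = μ X)
    (hext : ∀ X : Set α, X ⊆ μ X)
    (ν : Set α → Set α)
    (hν : ∀ X : Set α, ν X = ⋃ x ∈ X, μ {x}) :
    ((∀ X Y : Set α, X ⊆ Y → ν X ⊆ ν Y) ∧ (∀ X : Set α, ν (ν X) = ν X) ∧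
      (∀ X : Set α, X ⊆ ν X) ∧ (∀ 𝒮 : Set (Set α), ν (⋃₀ 𝒮) = ⋃₀ (ν '' 𝒮))) ∧
    (∀ X : Set α, ν X ⊆ μ X) ∧
    (∀ x : α, ν {x} = μ {x}) ∧
    (∀ ρ : Set α → Set α,
      (∀ X Y : Set α, X ⊆ Y → ρ X ⊆ ρ Y) → (∀ X : Set α, ρ (ρ X) = ρ X) →
      (∀ X : Set α, X ⊆ ρ X) → (∀ 𝒮 : Set (Set α), ρ (⋃₀ 𝒮) = ⋃₀ (ρ '' 𝒮)) →
      (∀ X : Set α, ρ X ⊆ μ X) → ∀ X : Set α, ρ X ⊆ ν X) := by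

  have hmem : ∀ X : Set α, ∀ y, y ∈ ν X ↔ ∃ x ∈ X, y ∈ μ {x} := by
    intro X y; rw [hν]; simp
  have hνmono : ∀ X Y : Set α, X ⊆ Y → ν X ⊆ ν Y := by
    intro X Y hXY y hy
    rcases (hmem X y).1 hy with ⟨x, hx, hyx⟩
    exact (hmem Y y).2 ⟨x, hXY hx, hyx⟩
  have hνext : ∀ X : Set α, X ⊆ ν X := by
    intro X x hx
    exact (hmem X x).2 ⟨x, hx, hext {x} rfl⟩
  have hsub : ∀ X : Set α, ν X ⊆ μ X := by
    intro X y hy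
    rcases (hmem X y).1 hy with ⟨x, hx, hyx⟩
    exact hmono {x} X (by simpa using hx) hyx
  have hνidem : ∀ X : Set α, ν (ν X) = ν X := by
    intro X
    apply Set.Subset.antisymm _ (hνext (ν X))
    intro y hy
    rcases (hmem (ν X) y).1 hy with ⟨z, hz, hyz⟩
    rcases (hmem X z).1 hz with ⟨x, hx, hzx⟩
    have h1 : μ {z} ⊆ μ {x} := by
      have : ({z} : Set α) ⊆ μ {x} := by simpa using hzx
      simpa [hidem] using hmono _ _ this
    exact (hmem X y).2 ⟨x, hx, h1 hyz⟩
  have hadd : ∀ 𝒮 : Set (Set α), ν (⋃₀ 𝒮) = ⋃₀ (ν '' 𝒮) := by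
    intro 𝒮
    ext y
    constructor
    · intro hy
      rcases (hmem _ y).1 hy with ⟨x, hx, hyx⟩
      rcases hx with ⟨S, hS, hxS⟩
      exact ⟨ν S, ⟨S, hS, rfl⟩, (hmem S y).2 ⟨x, hxS, hyx⟩⟩
    · rintro ⟨_, ⟨S, hS, rfl⟩, hy⟩
      rcases (hmem S y).1 hy with ⟨x, hx, hyx⟩
      exact (hmem _ y).2 ⟨x, ⟨S, hS, hx⟩, hyx⟩
  refine ⟨⟨hνmono, hνidem, hνext, hadd⟩, hsub, ?_, ?_⟩
  · intro x
    apply Set.Subset.antisymm (hsub {x})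
    intro y hy
    exact (hmem {x} y).2 ⟨x, rfl, hy⟩
  · intro ρ hρm hρi hρe hρa hρμ X y hy
    have hX : X = ⋃₀ ((fun x => ({x} : Set α)) '' X) := by
      ext z; simp
    rw [hX, hρa] at hy
    rcases hy with ⟨_, ⟨_, ⟨x, hx, rfl⟩, rfl⟩, hyρ⟩
    exact (hmem X y).2 ⟨x, hx, hρμ {x} hyρ⟩
end

section
/- Let 𝒳 ⊆ 𝒫(Σ) be a Moore family, i.e., 𝒳 is closed under arbitrary intersections (in particular Σ = ⋂∅ ∈ 𝒳). Then the family Clv(𝒳) := {⋃𝒮 | 𝒮 ⊆ 𝒳} of arbitrary unions of members of 𝒳 is also a Moore family: it is closed under arbitrary intersections. -/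
/-- If `𝒳` is a Moore family (closed under arbitrary intersections, with
`⋂₀ ∅ = univ`), then the family of arbitrary unions of members of `𝒳` is also closed
under arbitrary intersections. -/
theorem stmt_4 {α : Type*} (𝒳 : Set (Set α))
    (hMoore : ∀ 𝒮 ⊆ 𝒳, ⋂₀ 𝒮 ∈ 𝒳) :
    ∀ 𝒯 ⊆ {U : Set α | ∃ 𝒮 ⊆ 𝒳, U = ⋃₀ 𝒮},
      ⋂₀ 𝒯 ∈ {U : Set α | ∃ 𝒮 ⊆ 𝒳, U = ⋃₀ 𝒮} := by
  intro 𝒯 h𝒯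
  refine ⟨{X ∈ 𝒳 | X ⊆ ⋂₀ 𝒯}, fun X hX => hX.1, ?_⟩
  apply Set.Subset.antisymm
  · intro x hx
    -- for each T ∈ 𝒯 choose S_T ∈ 𝒳 with x ∈ S_T ⊆ T
    have hchoice : ∀ T : 𝒯, ∃ S, S ∈ 𝒳 ∧ x ∈ S ∧ S ⊆ (T : Set α) := by
      rintro ⟨T, hT⟩
      obtain ⟨𝒮, h𝒮, rfl⟩ := h𝒯 hT
      obtain ⟨S, hS, hxS⟩ := hx _ hT
      exact ⟨S, h𝒮 hS, hxS, Set.subset_sUnion_of_mem hS⟩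
    choose S hSX hxS hSsub using hchoice
    refine Set.mem_sUnion.2 ⟨⋂₀ (Set.range S), ?_, ?_⟩
    · refine ⟨hMoore _ ?_, ?_⟩
      · rintro _ ⟨T, rfl⟩; exact hSX T
      · intro y hy T hT
        exact hSsub ⟨T, hT⟩ (hy _ ⟨⟨T, hT⟩, rfl⟩)
    · exact fun _ ⟨T, hT⟩ => hT ▸ hxS T
  · intro x hx
    obtain ⟨X, hX, hxX⟩ := hx
    exact hX.2 hxX
end

section
/- Let (Σ,→) be a transition system with pre(Y) = {a ∈ Σ | ∃b ∈ Y, a → b}, and let μ be an additive upper closure operator on 𝒫(Σ). Then μ is forward complete for pre, i.e., pre(μ(X)) = μ(pre(μ(X))) for all X ⊆ Σ, if and only if the relation R_μ := {(s,s') | s' ∈ μ({s})} satisfies: for all s, t, s' ∈ Σ, if s → t and (s,s') ∈ R_μ then there exists t' ∈ Σ with s' → t' and (t,t') ∈ R_μ. -/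
/-- The predecessor transformer of a transition relation. -/
def pre {α : Type*} (r : α → α → Prop) (Y : Set α) : Set α := {a | ∃ b ∈ Y, r a b}

/-- An additive upper closure operator `μ` is forward complete for `pre`
iff the relation `R_μ = {(s,s') | s' ∈ μ {s}}` has the simulation-step property. -/
theorem stmt_5 {α : Type*} (r : α → α → Prop) (μ : Set α → Set α)
    (hmono : ∀ X Y : Set α, X ⊆ Y → μ X ⊆ μ Y)
    (hidem : ∀ X : Set α, μ (μ X) = μ X)
    (hext : ∀ X : Set α, X ⊆ μ X)
    (hadd : ∀ 𝒮 : Set (Set α), μ (⋃₀ 𝒮) = ⋃₀ (μ '' 𝒮)) :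
    (∀ X : Set α, pre r (μ X) = μ (pre r (μ X))) ↔
    (∀ s t s' : α, r s t → s' ∈ μ {s} → ∃ t' : α, r s' t' ∧ t' ∈ μ {t}) := by
  have key : ∀ (Y : Set α) (x : α), x ∈ μ Y ↔ ∃ y ∈ Y, x ∈ μ {y} := by
    intro Y x
    have hY : Y = ⋃₀ ((fun y => ({y} : Set α)) '' Y) := by
      ext z; simp
    have h2 : μ Y = ⋃₀ (μ '' ((fun y => ({y} : Set α)) '' Y)) := by
      rw [← hadd, ← hY]
    rw [h2]
    constructor
    · rintro ⟨S, ⟨T, ⟨y, hy, rfl⟩, rfl⟩, hx⟩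
      exact ⟨y, hy, hx⟩
    · rintro ⟨y, hy, hx⟩
      exact ⟨μ {y}, ⟨{y}, ⟨y, hy, rfl⟩, rfl⟩, hx⟩
  constructor
  · intro hfc s t s' hst hs'
    have hs : s ∈ pre r (μ {t}) := ⟨t, hext _ rfl, hst⟩
    have : s' ∈ μ (pre r (μ {t})) := by
      have := hmono {s} (pre r (μ {t})) (by simpa using hs)
      exact this hs'
    rw [← hfc {t}] at this
    obtain ⟨t', ht', hrt⟩ := this
    exact ⟨t', hrt, ht'⟩
  · intro hsim X
    apply Set.Subset.antisymm (hext _)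
    intro s' hs'
    rw [key] at hs'
    obtain ⟨s, ⟨b, hb, hsb⟩, hs'μ⟩ := hs'
    obtain ⟨t', hrt', ht'⟩ := hsim s b s' hsb hs'μ
    refine ⟨t', ?_, hrt'⟩
    rw [key] at hb ⊢
    obtain ⟨x, hx, hbx⟩ := hb
    refine ⟨x, hx, ?_⟩
    have : μ {b} ⊆ μ {x} := by
      have := hmono {b} (μ {x}) (by simpa using hbx)
      rwa [hidem] at this
    exact this ht'
end

section
/- Let ℓ : Σ → L be a labeling function, let μ_ℓ be the upper closure operator on 𝒫(Σ) whose image is the Moore closure of the set of ℓ-equivalence classes {[s]_ℓ | s ∈ Σ} (i.e., μ_ℓ(X) is the intersection of all supersets of X that are intersections of ℓ-classes, with the empty intersection equal to Σ), and let μ be an additive upper closure operator on 𝒫(Σ). Then μ(X) ⊆ μ_ℓ(X) for all X ⊆ Σ if and only if for all s, s' ∈ Σ, s' ∈ μ({s}) implies ℓ(s) = ℓ(s'). -/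
/-- The family of ℓ-equivalence classes `[s]_ℓ`. -/
def ellClasses {α L : Type*} (ℓ : α → L) : Set (Set α) :=
  {C | ∃ s : α, C = {s' | ℓ s' = ℓ s}}

/-- The Moore closure of a family of subsets: all intersections of subfamilies
(the empty intersection being `univ`). -/
def mooreOf {α : Type*} (𝒳 : Set (Set α)) : Set (Set α) :=
  {T | ∃ 𝒮 ⊆ 𝒳, T = ⋂₀ 𝒮}

/-- The closure operator associated with a Moore family `𝒳`. -/
def closureOf {α : Type*} (𝒳 : Set (Set α)) (X : Set α) : Set α :=
  ⋂₀ {T | T ∈ 𝒳 ∧ X ⊆ T}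

/-- For an additive upper closure operator `μ`, `μ` refines the labeling
closure `μ_ℓ` iff `s' ∈ μ {s}` implies `ℓ s = ℓ s'`. -/
theorem stmt_6 {α L : Type*} (ℓ : α → L) (μ : Set α → Set α)
    (hmono : ∀ X Y : Set α, X ⊆ Y → μ X ⊆ μ Y)
    (hidem : ∀ X : Set α, μ (μ X) = μ X)
    (hext : ∀ X : Set α, X ⊆ μ X)
    (hadd : ∀ 𝒮 : Set (Set α), μ (⋃₀ 𝒮) = ⋃₀ (μ '' 𝒮)) :
    (∀ X : Set α, μ X ⊆ closureOf (mooreOf (ellClasses ℓ)) X) ↔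
    (∀ s s' : α, s' ∈ μ {s} → ℓ s = ℓ s') := by
  constructor
  · intro h s s' hs'
    have := h {s} hs'
    have hmem : {t | ℓ t = ℓ s} ∈ {T | T ∈ mooreOf (ellClasses ℓ) ∧ ({s} : Set α) ⊆ T} := by
      refine ⟨⟨{{t | ℓ t = ℓ s}}, ?_, by simp⟩, by simp⟩
      intro C hC
      simp only [Set.mem_singleton_iff] at hC
      exact ⟨s, hC⟩
    exact ((this _ hmem) : ℓ s' = ℓ s).symm
  · intro h X x hx
    -- decompose X as union of singletons
    have hX : X = ⋃₀ ((fun s => ({s} : Set α)) '' X) := by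
      ext t; simp
    rw [hX, hadd] at hx
    obtain ⟨Y, hY, hxY⟩ := hx
    obtain ⟨Z, hZ, rfl⟩ := hY
    obtain ⟨s, hsX, rfl⟩ := hZ
    have hls : ℓ s = ℓ x := h s x hxY
    intro T hT
    obtain ⟨⟨𝒮, h𝒮, rfl⟩, hXT⟩ := hT
    intro S hS
    obtain ⟨t, rfl⟩ := h𝒮 hS
    have hsS : ℓ s = ℓ t := hXT hsX _ hS
    show ℓ x = ℓ t
    rw [← hls, hsS]
end

section
/- Let (Σ,→,ℓ) be a Kripke structure, let R_sim be the largest simulation relation on it, and define ν(X) := {s' ∈ Σ | ∃s ∈ X, (s,s') ∈ R_sim}. Then ν is the forward {∪,pre}-complete shell of the labeling closure: (1) ν is an additive upper closure operator on 𝒫(Σ); (2) ν is forward complete for pre, i.e., pre(ν(X)) = ν(pre(ν(X))) for all X; (3) ν({s}) ⊆ [s]_ℓ for every s ∈ Σ; and (4) ν is the greatest such operator: for every additive upper closure operator μ on 𝒫(Σ) satisfying pre(μ(X)) = μ(pre(μ(X))) for all X and μ({s}) ⊆ [s]_ℓ for all s, one has μ(X) ⊆ ν(X) for all X ⊆ Σ.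 In particular, (s,s') ∈ R_sim if and only if s' ∈ ν({s}). -/
/-- A relation `R` is a simulation on the Kripke structure `(α, r, ℓ)`. -/
def IsSimulation {α L : Type*} (r : α → α → Prop) (ℓ : α → L) (R : α → α → Prop) : Prop :=
  ∀ s s' : α, R s s' → ℓ s = ℓ s' ∧ ∀ t : α, r s t → ∃ t' : α, r s' t' ∧ R t t'

/-- With `Rsim` the largest simulation and `ν X = Rsim-image of X`, `ν` is
the forward `{∪, pre}`-complete shell of the labeling closure: an additive upper closure
operator, forward complete for `pre`, below the labeling on singletons, and greatest such;
moreover `Rsim s s' ↔ s' ∈ ν {s}`. -/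
theorem stmt_10 {α L : Type*} (r : α → α → Prop) (ℓ : α → L)
    (Rsim : α → α → Prop)
    (hRsim : ∀ a b : α, Rsim a b ↔ ∃ R : α → α → Prop, IsSimulation r ℓ R ∧ R a b)
    (ν : Set α → Set α)
    (hν : ∀ X : Set α, ν X = {s' | ∃ s ∈ X, Rsim s s'}) :
    ((∀ X Y : Set α, X ⊆ Y → ν X ⊆ ν Y) ∧ (∀ X : Set α, ν (ν X) = ν X) ∧
      (∀ X : Set α, X ⊆ ν X) ∧ (∀ 𝒮 : Set (Set α), ν (⋃₀ 𝒮) = ⋃₀ (ν '' 𝒮))) ∧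
    (∀ X : Set α, pre r (ν X) = ν (pre r (ν X))) ∧
    (∀ s : α, ν {s} ⊆ {s' | ℓ s' = ℓ s}) ∧
    (∀ μ : Set α → Set α,
      (∀ X Y : Set α, X ⊆ Y → μ X ⊆ μ Y) → (∀ X : Set α, μ (μ X) = μ X) →
      (∀ X : Set α, X ⊆ μ X) → (∀ 𝒮 : Set (Set α), μ (⋃₀ 𝒮) = ⋃₀ (μ '' 𝒮)) →
      (∀ X : Set α, pre r (μ X) = μ (pre r (μ X))) →
      (∀ s : α, μ {s} ⊆ {s' | ℓ s' = ℓ s}) →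
      ∀ X : Set α, μ X ⊆ ν X) ∧
    (∀ s s' : α, Rsim s s' ↔ s' ∈ ν {s}) := by
  -- Rsim is itself a simulation
  have hsim : IsSimulation r ℓ Rsim := by
    intro s s' h
    obtain ⟨R, hR, hRss⟩ := (hRsim s s').1 h
    obtain ⟨hl, hstep⟩ := hR s s' hRss
    refine ⟨hl, fun t hst => ?_⟩
    obtain ⟨t', hrt', hRtt'⟩ := hstep t hst
    exact ⟨t', hrt', (hRsim t t').2 ⟨R, hR, hRtt'⟩⟩
  -- reflexivity
  have hrefl : ∀ a, Rsim a a := fun a =>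
    (hRsim a a).2 ⟨Eq, fun s s' h => by subst h; exact ⟨rfl, fun t hst => ⟨t, hst, rfl⟩⟩, rfl⟩
  -- transitivity
  have htrans : ∀ a b c, Rsim a b → Rsim b c → Rsim a c := by
    intro a b c hab hbc
    refine (hRsim a c).2 ⟨fun x z => ∃ y, Rsim x y ∧ Rsim y z, ?_, b, hab, hbc⟩
    rintro s s' ⟨m, hsm, hms'⟩
    obtain ⟨hl1, hstep1⟩ := hsim s m hsm
    obtain ⟨hl2, hstep2⟩ := hsim m s' hms'
    refine ⟨hl1.trans hl2, fun t hst => ?_⟩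
    obtain ⟨u, hmu, htu⟩ := hstep1 t hst
    obtain ⟨t', hs't', hut'⟩ := hstep2 u hmu
    exact ⟨t', hs't', u, htu, hut'⟩
  have mono : ∀ X Y : Set α, X ⊆ Y → ν X ⊆ ν Y := by
    intro X Y hXY s' hs'
    rw [hν] at hs' ⊢
    obtain ⟨s, hs, h⟩ := hs'
    exact ⟨s, hXY hs, h⟩
  have ext : ∀ X : Set α, X ⊆ ν X := by
    intro X s hs; rw [hν]; exact ⟨s, hs, hrefl s⟩
  have idem : ∀ X : Set α, ν (ν X) = ν X := by
    intro X
    apply Set.Subset.antisymm _ (ext _)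
    intro s' hs'
    rw [hν] at hs'
    obtain ⟨s, hs, h⟩ := hs'
    rw [hν] at hs ⊢
    obtain ⟨x, hx, hxs⟩ := hs
    exact ⟨x, hx, htrans _ _ _ hxs h⟩
  refine ⟨⟨mono, idem, ext, ?_⟩, ?_, ?_, ?_, fun s s' => by
    rw [hν]; constructor
    · exact fun h => ⟨s, rfl, h⟩
    · rintro ⟨x, rfl, h⟩; exact h⟩
  · -- additivity
    intro 𝒮
    ext s'
    constructor
    · intro h
      rw [hν] at h
      obtain ⟨s, ⟨X, hX, hsX⟩, h⟩ := h
      exact ⟨ν X, ⟨X, hX, rfl⟩, by rw [hν]; exact ⟨s, hsX, h⟩⟩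
    · rintro ⟨_, ⟨X, hX, rfl⟩, h⟩
      rw [hν] at h
      obtain ⟨s, hsX, h⟩ := h
      rw [hν]
      exact ⟨s, ⟨X, hX, hsX⟩, h⟩
  · -- forward completeness
    intro X
    apply Set.Subset.antisymm (ext _)
    intro s' hs'
    rw [hν] at hs'
    obtain ⟨s, hs, h⟩ := hs'
    obtain ⟨b, hb, hsb⟩ := hs
    obtain ⟨_, hstep⟩ := hsim s s' h
    obtain ⟨b', hs'b', hbb'⟩ := hstep b hsb
    refine ⟨b', ?_, hs'b'⟩
    rw [hν] at hb ⊢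
    obtain ⟨x, hx, hxb⟩ := hb
    exact ⟨x, hx, htrans _ _ _ hxb hbb'⟩
  · -- label on singletons
    intro s s' hs'
    rw [hν] at hs'
    obtain ⟨x, hx, hxs'⟩ := hs'
    rcases hx with rfl
    exact ((hsim x s' hxs').1).symm
  · -- maximality
    intro μ hmono hidem hext hadd hfc hlab X s' hs'
    -- R x y := y ∈ μ {x} is a simulation
    have hRsimul : IsSimulation r ℓ (fun x y => y ∈ μ {x}) := by
      intro s t hst
      refine ⟨(hlab s hst).symm, fun u hsu => ?_⟩
      have h1 : s ∈ pre r (μ {u}) := ⟨u, hext {u} rfl, hsu⟩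
      have h2 : ({s} : Set α) ⊆ μ (pre r (μ {u})) := by
        rw [← hfc]
        rintro x rfl; exact h1
      have h3 : μ {s} ⊆ pre r (μ {u}) := by
        have := hmono _ _ h2
        rw [hidem, ← hfc] at this
        exact this
      obtain ⟨u', hu', htu'⟩ := h3 hst
      exact ⟨u', htu', hu'⟩
    -- decompose μ X via additivity over singletons
    have hX : X = ⋃₀ ((fun s => ({s} : Set α)) '' X) := by
      ext x; simp
    rw [hX, hadd] at hs'
    obtain ⟨_, ⟨_, ⟨x, hx, rfl⟩, rfl⟩, hmem⟩ := hs'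
    rw [hν]
    exact ⟨x, hx, (hRsim x s').2 ⟨_, hRsimul, hmem⟩⟩
end

section
/- Let P be a partition of Σ and R ⊆ P×P a partial order (reflexive, transitive, antisymmetric) on the blocks of P, and let μ_{⟨P,R⟩}(X) := ⋃ {C ∈ P | ∃B ∈ P, B ∩ X ≠ ∅ and (B,C) ∈ R*}. Then the partition induced by μ_{⟨P,R⟩} is exactly P: for all x, y ∈ Σ, μ_{⟨P,R⟩}({x}) = μ_{⟨P,R⟩}({y}) if and only if x and y lie in the same block of P. -/
/-- If `R` is a partial order on the blocks of the partition `P`, then the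
partition induced by `μ_{⟨P,R⟩}` is exactly `P`: the images of two singletons agree iff
the two states lie in the same block. -/
theorem stmt_14 {α : Type*} (P : Set (Set α))
    (hne : ∀ B ∈ P, B.Nonempty)
    (hdisj : ∀ B ∈ P, ∀ C ∈ P, B ≠ C → B ∩ C = ∅)
    (hcover : ⋃₀ P = Set.univ)
    (R : Set α → Set α → Prop)
    (hR : ∀ B C : Set α, R B C → B ∈ P ∧ C ∈ P)
    (hrefl : ∀ B ∈ P, R B B)
    (htrans : ∀ B C D : Set α, R B C → R C D → R B D)
    (hantisymm : ∀ B C : Set α, R B C → R C B → B = C)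
    (μPR : Set α → Set α)
    (hμPR : ∀ X : Set α, μPR X =
      ⋃₀ {C : Set α | C ∈ P ∧ ∃ B ∈ P, (B ∩ X).Nonempty ∧ Relation.ReflTransGen R B C}) :
    ∀ x y : α, μPR {x} = μPR {y} ↔ ∃ B ∈ P, x ∈ B ∧ y ∈ B := by
  -- ReflTransGen collapses to (eq or R)
  have hrtg : ∀ B C : Set α, Relation.ReflTransGen R B C → B = C ∨ R B C := by
    intro B C h
    induction h with
    | refl => exact Or.inl rfl
    | tail _ hbc ih =>
      rcases ih with rfl | hR'
      · exact Or.inr hbc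
      · exact Or.inr (htrans _ _ _ hR' hbc)
  have huniq : ∀ B ∈ P, ∀ C ∈ P, ∀ z : α, z ∈ B → z ∈ C → B = C := by
    intro B hB C hC z hzB hzC
    by_contra hne'
    have := hdisj B hB C hC hne'
    exact absurd this (by
      intro h
      exact (Set.eq_empty_iff_forall_notMem.mp h z) ⟨hzB, hzC⟩)
  intro x y
  constructor
  · intro heq
    -- get blocks of x and y
    have hx : x ∈ ⋃₀ P := by rw [hcover]; trivial
    have hy : y ∈ ⋃₀ P := by rw [hcover]; trivial
    obtain ⟨Bx, hBx, hxBx⟩ := hx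
    obtain ⟨By, hBy, hyBy⟩ := hy
    -- x ∈ μPR {x}
    have hxin : x ∈ μPR {x} := by
      rw [hμPR]
      exact ⟨Bx, ⟨hBx, Bx, hBx, ⟨x, hxBx, rfl⟩, Relation.ReflTransGen.refl⟩, hxBx⟩
    rw [heq, hμPR] at hxin
    obtain ⟨C, ⟨hC, B, hB, hBy', hrel⟩, hxC⟩ := hxin
    obtain ⟨z, hzB, hzy⟩ := hBy'
    have hzy' : z = y := hzy
    have hyB : y ∈ B := hzy' ▸ hzB
    have hBBy : B = By := huniq B hB By hBy y hyB hyBy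
    have hCBx : C = Bx := huniq C hC Bx hBx x hxC hxBx
    -- ReflTransGen R By Bx; symmetrically from y side
    have hyin : y ∈ μPR {y} := by
      rw [hμPR]
      exact ⟨B, ⟨hB, B, hB, ⟨y, hyB, rfl⟩, Relation.ReflTransGen.refl⟩, hyB⟩
    rw [← heq, hμPR] at hyin
    obtain ⟨C', ⟨hC', B', hB', hBx', hrel'⟩, hyC'⟩ := hyin
    obtain ⟨w, hwB', hwx⟩ := hBx'
    have hwx' : w = x := hwx
    have hxB' : x ∈ B' := hwx' ▸ hwB'
    have hB'C : B' = C := huniq B' hB' C hC x hxB' hxC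
    have hC'B : C' = B := huniq C' hC' B hB y hyC' hyB
    -- antisymmetry
    have h1 : B = C ∨ R B C := hrtg _ _ hrel
    have h2 : C = B ∨ R C B := hrtg _ _ (hB'C ▸ hC'B ▸ hrel')
    have hBC : B = C := by
      rcases h1 with h1 | h1
      · exact h1
      rcases h2 with h2 | h2
      · exact h2.symm
      · exact hantisymm _ _ h1 h2
    exact ⟨B, hB, hBC ▸ hxC, hyB⟩
  · rintro ⟨B, hB, hxB, hyB⟩
    rw [hμPR, hμPR]
    apply congrArg
    ext C
    simp only [Set.mem_setOf_eq]
    constructor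
    · intro h
      obtain ⟨hC, B', hB', ⟨z, hzB', hzx⟩, hrel⟩ := h
      have hz : z = x := hzx
      have hBB' : B = B' := huniq B hB B' hB' x hxB (hz ▸ hzB')
      exact ⟨hC, B', hB', ⟨y, hBB' ▸ hyB, rfl⟩, hrel⟩
    · intro h
      obtain ⟨hC, B', hB', ⟨z, hzB', hzy⟩, hrel⟩ := h
      have hz : z = y := hzy
      have hBB' : B = B' := huniq B hB B' hB' y hyB (hz ▸ hzB')
      exact ⟨hC, B', hB', ⟨x, hBB' ▸ hxB, rfl⟩, hrel⟩
end

section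
/- Let P be a partition of Σ and R ⊆ P×P a partial order (reflexive, transitive, antisymmetric) on the blocks of P, and let μ_{⟨P,R⟩}(X) := ⋃ {C ∈ P | ∃B ∈ P, B ∩ X ≠ ∅ and (B,C) ∈ R*}. Then R is recovered from μ_{⟨P,R⟩}: for all blocks B, C ∈ P, (B,C) ∈ R if and only if C ⊆ μ_{⟨P,R⟩}(B). -/
/-- If `R` is a partial order on the blocks of the partition `P`, then `R`
is recovered from `μ_{⟨P,R⟩}`: for blocks `B, C ∈ P`, `(B,C) ∈ R ↔ C ⊆ μ_{⟨P,R⟩} B`. -/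
theorem stmt_15 {α : Type*} (P : Set (Set α))
    (hne : ∀ B ∈ P, B.Nonempty)
    (hdisj : ∀ B ∈ P, ∀ C ∈ P, B ≠ C → B ∩ C = ∅)
    (hcover : ⋃₀ P = Set.univ)
    (R : Set α → Set α → Prop)
    (hR : ∀ B C : Set α, R B C → B ∈ P ∧ C ∈ P)
    (hrefl : ∀ B ∈ P, R B B)
    (htrans : ∀ B C D : Set α, R B C → R C D → R B D)
    (hantisymm : ∀ B C : Set α, R B C → R C B → B = C)
    (μPR : Set α → Set α)
    (hμPR : ∀ X : Set α, μPR X =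
      ⋃₀ {C : Set α | C ∈ P ∧ ∃ B ∈ P, (B ∩ X).Nonempty ∧ Relation.ReflTransGen R B C}) :
    ∀ B ∈ P, ∀ C ∈ P, (R B C ↔ C ⊆ μPR B) := by
  intro B hB C hC
  constructor
  · intro hRBC x hx
    rw [hμPR]
    exact ⟨C, ⟨hC, B, hB, by simpa using hne B hB, Relation.ReflTransGen.single hRBC⟩, hx⟩
  · intro hsub
    obtain ⟨x, hx⟩ := hne C hC
    have := hsub hx
    rw [hμPR] at this
    obtain ⟨C', ⟨hC', B', hB', hBB', hrt⟩, hxC'⟩ := this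
    have hCC' : C = C' := by
      by_contra h
      have := hdisj C hC C' hC' h
      exact absurd this (Set.nonempty_iff_ne_empty.mp ⟨x, hx, hxC'⟩)
    have hBB : B' = B := by
      by_contra h
      have := hdisj B' hB' B hB h
      exact absurd this (Set.nonempty_iff_ne_empty.mp hBB')
    have key : ∀ X Y : Set α, X ∈ P → Relation.ReflTransGen R X Y → R X Y := by
      intro X Y hX h
      induction h with
      | refl => exact hrefl X hX
      | tail _ h ih => exact htrans _ _ _ ih h
    subst hCC' hBB
    exact key _ _ hB hrt
end

section
/- Let μ be an additive upper closure operator on 𝒫(Σ). Let P_μ be the partition of Σ into equivalence classes of x ≡ y ⇔ μ({x}) = μ({y}), and let R_μ := {(B,C) ∈ P_μ×P_μ | C ⊆ μ(B)}. Then the closure operator induced by the partition-relation pair ⟨P_μ,R_μ⟩ equals μ: for all X ⊆ Σ, ⋃ {C ∈ P_μ | ∃B ∈ P_μ, B ∩ X ≠ ∅ and (B,C) ∈ R_μ*} = μ(X). -/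
/-- For an additive upper closure operator `μ`, with `P_μ` the partition
induced by `μ` and `R_μ = {(B,C) ∈ P_μ × P_μ | C ⊆ μ B}`, the closure operator induced by
the partition-relation pair `⟨P_μ, R_μ⟩` equals `μ`. -/
theorem stmt_16 {α : Type*} (μ : Set α → Set α)
    (hmono : ∀ X Y : Set α, X ⊆ Y → μ X ⊆ μ Y)
    (hidem : ∀ X : Set α, μ (μ X) = μ X)
    (hext : ∀ X : Set α, X ⊆ μ X)
    (hadd : ∀ 𝒮 : Set (Set α), μ (⋃₀ 𝒮) = ⋃₀ (μ '' 𝒮))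
    (Pμ : Set (Set α))
    (hPμ : Pμ = {B : Set α | ∃ x : α, B = {y : α | μ {y} = μ {x}}})
    (Rμ : Set α → Set α → Prop)
    (hRμ : ∀ B C : Set α, Rμ B C ↔ B ∈ Pμ ∧ C ∈ Pμ ∧ C ⊆ μ B)
    (X : Set α) :
    ⋃₀ {C : Set α | C ∈ Pμ ∧ ∃ B ∈ Pμ, (B ∩ X).Nonempty ∧ Relation.ReflTransGen Rμ B C}
      = μ X := by
  -- basic fact: B ⊆ μ Y → μ B ⊆ μ Y
  have hmin : ∀ B Y : Set α, B ⊆ μ Y → μ B ⊆ μ Y := by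
    intro B Y h
    have := hmono B (μ Y) h
    rwa [hidem] at this
  -- class of x
  have hclass : ∀ x : α, {y : α | μ {y} = μ {x}} ⊆ μ {x} := by
    intro x y hy
    have : y ∈ μ {y} := hext {y} rfl
    rwa [hy] at this
  have hclassμ : ∀ x : α, μ {y : α | μ {y} = μ {x}} = μ {x} := by
    intro x
    apply Set.Subset.antisymm (hmin _ _ (hclass x))
    exact hmono _ _ (fun z hz => by simp at hz; simp [hz])
  ext y
  constructor
  · rintro ⟨C, ⟨hC, B, hB, ⟨b, hbB, hbX⟩, hchain⟩, hyC⟩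
    -- B ⊆ μ X
    obtain ⟨x, rfl⟩ := hPμ ▸ hB
    have hBX : {y : α | μ {y} = μ {x}} ⊆ μ X := by
      intro z hz
      have hz' : μ {z} = μ {b} := by
        simp only [Set.mem_setOf_eq] at hz hbB
        rw [hz, hbB]
      have : z ∈ μ {z} := hext {z} rfl
      rw [hz'] at this
      exact hmono {b} X (by simpa using hbX) this
    -- chain preserves ⊆ μ X
    have key : ∀ D : Set α, Relation.ReflTransGen Rμ {y : α | μ {y} = μ {x}} D → D ⊆ μ X := by
      intro D h
      induction h with
      | refl => exact hBX
      | tail _ hstep ih =>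
        exact ((hRμ _ _).1 hstep).2.2.trans (hmin _ _ ih)
    exact key C hchain hyC
  · intro hy
    -- μ X = ⋃ over singletons
    have hX : X = ⋃₀ {S : Set α | ∃ x ∈ X, S = ({x} : Set α)} := by
      ext z
      constructor
      · exact fun h => ⟨{z}, ⟨z, h, rfl⟩, rfl⟩
      · rintro ⟨t, ⟨x, hx, rfl⟩, hz⟩
        rw [Set.mem_singleton_iff] at hz
        subst hz; exact hx
    rw [hX, hadd] at hy
    obtain ⟨_, ⟨S, ⟨x, hxX, rfl⟩, rfl⟩, hyμx⟩ := hy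
    refine ⟨{z : α | μ {z} = μ {y}}, ⟨hPμ ▸ ⟨y, rfl⟩, {z : α | μ {z} = μ {x}},
      hPμ ▸ ⟨x, rfl⟩, ⟨x, by simp, hxX⟩, ?_⟩, by simp⟩
    refine Relation.ReflTransGen.single ((hRμ _ _).2 ⟨hPμ ▸ ⟨x, rfl⟩, hPμ ▸ ⟨y, rfl⟩, ?_⟩)
    rw [hclassμ x]
    intro z hz
    have hz1 : z ∈ μ {y} := by
      have : z ∈ μ {z} := hext {z} rfl
      rwa [Set.mem_setOf_eq.mp hz] at this
    exact hmin {y} {x} (by simpa using hyμx) hz1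
end

section
/- Let (Σ,→) be a transition system, P a partition of Σ, and R ⊆ P×P a reflexive relation on the blocks of P. Assume that for all blocks B, C ∈ P, if C ∩ pre(B) ≠ ∅ then ⋃R(C) ⊆ pre(⋃R(B)), where R(B) := {C ∈ P | (B,C) ∈ R}. Then the induced closure operator μ_{⟨P,R⟩}(X) := ⋃ {C ∈ P | ∃B ∈ P, B ∩ X ≠ ∅ and (B,C) ∈ R*} is forward complete for pre: pre(μ_{⟨P,R⟩}(X)) = μ_{⟨P,R⟩}(pre(μ_{⟨P,R⟩}(X))) for all X ⊆ Σ. -/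
lemma pre_mono {α : Type*} (r : α → α → Prop) {Y Z : Set α} (h : Y ⊆ Z) :
    pre r Y ⊆ pre r Z := fun _ ⟨b, hb, hr⟩ => ⟨b, h hb, hr⟩

lemma key_lemma {α : Type*} (r : α → α → Prop) (P : Set (Set α))
    (hne : ∀ B ∈ P, B.Nonempty)
    (R : Set α → Set α → Prop)
    (hR : ∀ B C : Set α, R B C → B ∈ P ∧ C ∈ P)
    (hrefl : ∀ B ∈ P, R B B)
    (hyp : ∀ B ∈ P, ∀ C ∈ P, (C ∩ pre r B).Nonempty →
      ⋃₀ {D : Set α | D ∈ P ∧ R C D} ⊆ pre r (⋃₀ {D : Set α | D ∈ P ∧ R B D}))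
    {B D : Set α} (hB : B ∈ P) (hD : D ∈ P) (hBD : (B ∩ pre r D).Nonempty)
    {C : Set α} (hBC : Relation.ReflTransGen R B C) :
    C ⊆ pre r (⋃₀ {D' : Set α | D' ∈ P ∧ Relation.ReflTransGen R D D'}) := by
  induction hBC with
  | refl =>
    intro a ha
    have h1 := hyp D hD B hB hBD ⟨B, ⟨hB, hrefl B hB⟩, ha⟩
    refine pre_mono r (Set.sUnion_mono fun D' h => ?_) h1
    exact ⟨h.1, Relation.ReflTransGen.single h.2⟩
  | @tail C' C hBC' hC'C ih =>
    obtain ⟨hC', hC⟩ := hR C' C hC'C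
    obtain ⟨c', hc'⟩ := hne C' hC'
    obtain ⟨e, he, hre⟩ := ih hc'
    obtain ⟨D', ⟨hD'P, hDD'⟩, heD'⟩ := he
    intro a ha
    have h1 := hyp D' hD'P C' hC' ⟨c', hc', e, heD', hre⟩ ⟨C, ⟨hC, hC'C⟩, ha⟩
    refine pre_mono r (Set.sUnion_mono fun D'' h => ?_) h1
    exact ⟨h.1, hDD'.tail h.2⟩

/-- If `R` is a reflexive relation on the blocks of a partition `P` such
that `C ∩ pre(B) ≠ ∅` implies `⋃R(C) ⊆ pre(⋃R(B))` for all blocks `B, C`, then the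
induced closure operator `μ_{⟨P,R⟩}` is forward complete for `pre`. -/
theorem stmt_17 {α : Type*} (r : α → α → Prop)
    (P : Set (Set α))
    (hne : ∀ B ∈ P, B.Nonempty)
    (hdisj : ∀ B ∈ P, ∀ C ∈ P, B ≠ C → B ∩ C = ∅)
    (hcover : ⋃₀ P = Set.univ)
    (R : Set α → Set α → Prop)
    (hR : ∀ B C : Set α, R B C → B ∈ P ∧ C ∈ P)
    (hrefl : ∀ B ∈ P, R B B)
    (hyp : ∀ B ∈ P, ∀ C ∈ P, (C ∩ pre r B).Nonempty →
      ⋃₀ {D : Set α | D ∈ P ∧ R C D} ⊆ pre r (⋃₀ {D : Set α | D ∈ P ∧ R B D}))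
    (μPR : Set α → Set α)
    (hμPR : ∀ X : Set α, μPR X =
      ⋃₀ {C : Set α | C ∈ P ∧ ∃ B ∈ P, (B ∩ X).Nonempty ∧ Relation.ReflTransGen R B C}) :
    ∀ X : Set α, pre r (μPR X) = μPR (pre r (μPR X)) := by
  intro X
  apply Set.Subset.antisymm
  · -- extensivity
    intro a ha
    rw [hμPR (pre r (μPR X))]
    have : a ∈ ⋃₀ P := hcover ▸ Set.mem_univ a
    obtain ⟨B, hBP, haB⟩ := this
    exact ⟨B, ⟨hBP, B, hBP, ⟨a, haB, ha⟩, Relation.ReflTransGen.refl⟩, haB⟩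
  · intro a ha
    rw [hμPR (pre r (μPR X))] at ha
    obtain ⟨C, ⟨hCP, B, hBP, hBne, hBC⟩, haC⟩ := ha
    obtain ⟨c, hcB, d, hd, hrcd⟩ := hBne
    rw [hμPR X] at hd
    obtain ⟨D, ⟨hDP, E, hEP, hEX, hED⟩, hdD⟩ := hd
    have hkey := key_lemma r P hne R hR hrefl hyp hBP hDP ⟨c, hcB, d, hdD, hrcd⟩ hBC haC
    refine pre_mono r ?_ hkey
    intro x ⟨D', ⟨hD'P, hDD'⟩, hxD'⟩
    rw [hμPR X]
    exact ⟨D', ⟨hD'P, E, hEP, hEX, hED.trans hDD'⟩, hxD'⟩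
end

section
/- Let (Σ,→) be a transition system, μ an additive upper closure operator on 𝒫(Σ), and P a partition of Σ that refines pr(μ) (any two states in the same block of P have equal μ-closures of their singletons). Then μ is forward complete for pre (i.e., pre(μ(X)) = μ(pre(μ(X))) for all X ⊆ Σ) if and only if for all blocks B, C ∈ P, C ∩ pre(B) ≠ ∅ implies μ(C) ⊆ pre(μ(B)). -/
/-- Decompose `μ` of a set into the union of `μ` of singletons. -/
lemma mu_sUnion_singletons {α : Type*} (μ : Set α → Set α)
    (hadd : ∀ 𝒮 : Set (Set α), μ (⋃₀ 𝒮) = ⋃₀ (μ '' 𝒮)) (S : Set α) :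
    μ S = ⋃ x ∈ S, μ {x} := by
  have h1 : S = ⋃₀ ((fun y => ({y} : Set α)) '' S) := by
    ext z; simp
  have := hadd ((fun y => ({y} : Set α)) '' S)
  rw [← h1] at this
  rw [this]
  ext z
  simp [Set.sUnion_image]

/-- On a block of the refining partition, `μ` of the block equals `μ` of any singleton. -/
lemma mu_block_eq {α : Type*} (μ : Set α → Set α)
    (hadd : ∀ 𝒮 : Set (Set α), μ (⋃₀ 𝒮) = ⋃₀ (μ '' 𝒮))
    (P : Set (Set α))
    (hrefine : ∀ B ∈ P, ∀ x ∈ B, ∀ y ∈ B, μ {x} = μ {y})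
    {B : Set α} (hB : B ∈ P) {x : α} (hx : x ∈ B) :
    μ B = μ {x} := by
  rw [mu_sUnion_singletons μ hadd B]
  ext z
  simp only [Set.mem_iUnion]
  constructor
  · rintro ⟨y, hy, hz⟩
    rwa [hrefine B hB y hy x hx] at hz
  · intro hz
    exact ⟨x, hx, hz⟩

/-- For an additive upper closure operator `μ` and a partition `P` refining
the partition induced by `μ`, `μ` is forward complete for `pre` iff for all blocks
`B, C ∈ P`, `C ∩ pre(B) ≠ ∅` implies `μ C ⊆ pre (μ B)`. -/
theorem stmt_18 {α : Type*} (r : α → α → Prop) (μ : Set α → Set α)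
    (hmono : ∀ X Y : Set α, X ⊆ Y → μ X ⊆ μ Y)
    (hidem : ∀ X : Set α, μ (μ X) = μ X)
    (hext : ∀ X : Set α, X ⊆ μ X)
    (hadd : ∀ 𝒮 : Set (Set α), μ (⋃₀ 𝒮) = ⋃₀ (μ '' 𝒮))
    (P : Set (Set α))
    (hne : ∀ B ∈ P, B.Nonempty)
    (hdisj : ∀ B ∈ P, ∀ C ∈ P, B ≠ C → B ∩ C = ∅)
    (hcover : ⋃₀ P = Set.univ)
    (hrefine : ∀ B ∈ P, ∀ x ∈ B, ∀ y ∈ B, μ {x} = μ {y}) :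
    (∀ X : Set α, pre r (μ X) = μ (pre r (μ X))) ↔
    (∀ B ∈ P, ∀ C ∈ P, (C ∩ pre r B).Nonempty → μ C ⊆ pre r (μ B)) := by
  have hblock : ∀ a : α, ∃ B ∈ P, a ∈ B := by
    intro a
    have : a ∈ ⋃₀ P := by rw [hcover]; trivial
    simpa using this
  constructor
  · intro hfc B hB C hC ⟨x, hxC, hxpre⟩
    obtain ⟨b, hbB, hrb⟩ := hxpre
    have hxpreμ : x ∈ pre r (μ B) := ⟨b, hext B hbB, hrb⟩
    have hμC : μ C = μ {x} := mu_block_eq μ hadd P hrefine hC hxC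
    rw [hμC]
    have : μ {x} ⊆ μ (pre r (μ B)) :=
      hmono _ _ (Set.singleton_subset_iff.mpr hxpreμ)
    rwa [← hfc B] at this
  · intro hblk X
    apply Set.Subset.antisymm (hext _)
    intro z hz
    rw [mu_sUnion_singletons μ hadd (pre r (μ X))] at hz
    simp only [Set.mem_iUnion] at hz
    obtain ⟨x, hx, hzx⟩ := hz
    obtain ⟨b, hbμX, hrxb⟩ := hx
    rw [mu_sUnion_singletons μ hadd X] at hbμX
    simp only [Set.mem_iUnion] at hbμX
    obtain ⟨a, haX, hba⟩ := hbμX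
    obtain ⟨B, hB, hbB⟩ := hblock b
    obtain ⟨C, hC, hxC⟩ := hblock x
    have hCB : μ C ⊆ pre r (μ B) :=
      hblk B hB C hC ⟨x, hxC, b, hbB, hrxb⟩
    have hzC : z ∈ μ C := by
      rw [mu_block_eq μ hadd P hrefine hC hxC]; exact hzx
    obtain ⟨b', hb'μB, hrzb'⟩ := hCB hzC
    have hμBsub : μ B ⊆ μ X := by
      rw [mu_block_eq μ hadd P hrefine hB hbB]
      have h1 : μ {b} ⊆ μ (μ {a}) :=
        hmono _ _ (Set.singleton_subset_iff.mpr hba)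
      rw [hidem] at h1
      exact h1.trans (hmono _ _ (Set.singleton_subset_iff.mpr haX))
    exact ⟨b', hμBsub hb'μB, hrzb'⟩
end
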